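/- Suppose the observation kernel Q is continuous in total variation (x_n → x implies ‖Q(·|x_n) − Q(·|x)‖_TV → 0), c: X×U → ℝ is bounded and continuous, and U is compact. Then for any x_k → x, sup over all measurable policies γ: Y → U of |∫ Q(dy|x_k) c(x_k, γ(y)) − ∫ Q(dy|x) c(x, γ(y))| → 0; i.e., the family of functions x ↦ ∫ Q(dy|x) c(x,γ(y)), γ ∈ Γ, is equicontinuous. -/

import Mathlib

/-!
Split the difference at a policy `γ` as
`(∫ c(x_k, γ) dQ(x_k) − ∫ c(x_k, γ) dQ(x)) + ∫ (c(x_k, γ) − c(x, γ)) dQ(x)`.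
Through the Jordan decomposition of `Q(x_k) − Q(x)`, the first term is at most
`‖c(x_k, ·)‖_∞ · ‖Q(x_k) − Q(x)‖_TV`; the second is at most `‖c(x_k, ·) − c(x, ·)‖_∞`. Neither
bound depends on `γ`, and both tend to zero because, `U` being compact, `x ↦ c(x, ·)` is
continuous into `C(U, ℝ)` with the sup norm.
-/

open MeasureTheory ProbabilityTheory Filter

/-- Total variation distance (factor-2 convention). -/
noncomputable def tvDist {α : Type*} [MeasurableSpace α] (μ ν : Measure α) : ℝ :=
  2 * ⨆ B : {B : Set α // MeasurableSet B}, |(μ B.1).toReal - (ν B.1).toReal|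

open Topology

section TotalVariation

variable {α : Type*} [MeasurableSpace α]

lemma tvDist_nonneg (μ ν : Measure α) : 0 ≤ tvDist μ ν :=
  mul_nonneg zero_le_two (Real.iSup_nonneg fun _ => abs_nonneg _)

variable (μ ν : Measure α) [IsFiniteMeasure μ] [IsFiniteMeasure ν]

lemma two_mul_abs_measureReal_sub_le_tvDist {B : Set α} (hB : MeasurableSet B) :
    2 * |μ.real B - ν.real B| ≤ tvDist μ ν := by
  have hbdd : BddAbove (Set.range fun B : {B : Set α // MeasurableSet B} =>
      |(μ B.1).toReal - (ν B.1).toReal|) := by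
    refine ⟨μ.real Set.univ + ν.real Set.univ, ?_⟩
    rintro _ ⟨C, rfl⟩
    change |μ.real C.1 - ν.real C.1| ≤ _
    have hμ : μ.real C.1 ≤ μ.real Set.univ := measureReal_mono (Set.subset_univ _)
    have hν : ν.real C.1 ≤ ν.real Set.univ := measureReal_mono (Set.subset_univ _)
    exact abs_sub_le_iff.2 ⟨by linarith [measureReal_nonneg (μ := ν) (s := C.1)],
      by linarith [measureReal_nonneg (μ := μ) (s := C.1)]⟩
  exact mul_le_mul_of_nonneg_left (le_ciSup hbdd ⟨B, hB⟩) zero_le_two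

variable {μ ν} (j : JordanDecomposition α)
  (hj : j.toSignedMeasure = μ.toSignedMeasure - ν.toSignedMeasure)
include hj

lemma MeasureTheory.JordanDecomposition.measureReal_sub_eq_of_toSignedMeasure_eq {B : Set α}
    (hB : MeasurableSet B) :
    μ.real B - ν.real B = j.posPart.real B - j.negPart.real B := by
  rw [← Measure.toSignedMeasure_sub_apply hB, ← hj, JordanDecomposition.toSignedMeasure,
    Measure.toSignedMeasure_sub_apply hB]

lemma MeasureTheory.JordanDecomposition.add_negPart_eq_add_posPart_of_toSignedMeasure_eq :
    μ + j.negPart = ν + j.posPart := by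
  ext B hB
  rw [← ENNReal.toReal_eq_toReal_iff' (measure_ne_top _ _) (measure_ne_top _ _)]
  change (μ + j.negPart).real B = (ν + j.posPart).real B
  rw [measureReal_add_apply, measureReal_add_apply]
  linarith [j.measureReal_sub_eq_of_toSignedMeasure_eq hj hB]

lemma MeasureTheory.JordanDecomposition.measureReal_univ_add_le_tvDist_of_toSignedMeasure_eq :
    j.posPart.real Set.univ + j.negPart.real Set.univ ≤ tvDist μ ν := by
  obtain ⟨S, hS, hPS, hNS⟩ := j.mutuallySingular
  have hPS' : j.posPart.real S = 0 := by simp [measureReal_def, hPS]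
  have hNS' : j.negPart.real Sᶜ = 0 := by simp [measureReal_def, hNS]
  have hP : j.posPart.real Set.univ = μ.real Sᶜ - ν.real Sᶜ := by
    linarith [measureReal_add_measureReal_compl (μ := j.posPart) hS,
      j.measureReal_sub_eq_of_toSignedMeasure_eq hj hS.compl]
  have hN : j.negPart.real Set.univ = -(μ.real S - ν.real S) := by
    linarith [measureReal_add_measureReal_compl (μ := j.negPart) hS,
      j.measureReal_sub_eq_of_toSignedMeasure_eq hj hS]
  rw [hP, hN]
  linarith [le_abs_self (μ.real Sᶜ - ν.real Sᶜ), neg_le_abs (μ.real S - ν.real S),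
    two_mul_abs_measureReal_sub_le_tvDist μ ν hS,
    two_mul_abs_measureReal_sub_le_tvDist μ ν hS.compl]

omit hj

variable (μ ν)

lemma abs_integral_sub_le_mul_tvDist {f : α → ℝ} (hf : Measurable f) {M : ℝ} (hM0 : 0 ≤ M)
    (hM : ∀ y, ‖f y‖ ≤ M) :
    |(∫ y, f y ∂μ) - ∫ y, f y ∂ν| ≤ M * tvDist μ ν := by
  set j := (μ.toSignedMeasure - ν.toSignedMeasure).toJordanDecomposition
  have hj : j.toSignedMeasure = μ.toSignedMeasure - ν.toSignedMeasure :=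
    SignedMeasure.toSignedMeasure_toJordanDecomposition _
  have hint : ∀ (κ : Measure α) [IsFiniteMeasure κ], Integrable f κ := fun κ _ =>
    .of_bound hf.aestronglyMeasurable M (ae_of_all _ hM)
  have hbound : ∀ (κ : Measure α) [IsFiniteMeasure κ], |∫ y, f y ∂κ| ≤ M * κ.real Set.univ :=
    fun κ _ => norm_integral_le_of_norm_le_const (ae_of_all _ hM)
  have hsplit : (∫ y, f y ∂μ) - ∫ y, f y ∂ν = (∫ y, f y ∂j.posPart) - ∫ y, f y ∂j.negPart := by
    have hintegral := congrArg (fun κ => ∫ y, f y ∂κ)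
      (j.add_negPart_eq_add_posPart_of_toSignedMeasure_eq hj)
    simp only [integral_add_measure (hint _) (hint _)] at hintegral
    linarith
  calc |(∫ y, f y ∂μ) - ∫ y, f y ∂ν|
      ≤ |∫ y, f y ∂j.posPart| + |∫ y, f y ∂j.negPart| := hsplit ▸ abs_sub _ _
    _ ≤ M * (j.posPart.real Set.univ + j.negPart.real Set.univ) := by
      linarith [hbound j.posPart, hbound j.negPart]
    _ ≤ M * tvDist μ ν :=
      mul_le_mul_of_nonneg_left
        (j.measureReal_univ_add_le_tvDist_of_toSignedMeasure_eq hj) hM0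

end TotalVariation

lemma abs_integral_comp_sub_le {Y U : Type*} [MeasurableSpace Y] [TopologicalSpace U]
    [MeasurableSpace U] [OpensMeasurableSpace U] [CompactSpace U]
    (μ ν : Measure Y) [IsFiniteMeasure μ] [IsProbabilityMeasure ν]
    (f g : C(U, ℝ)) {γ : Y → U} (hγ : Measurable γ) :
    |(∫ y, f (γ y) ∂μ) - ∫ y, g (γ y) ∂ν| ≤ ‖f‖ * tvDist μ ν + dist f g := by
  have hmeas : ∀ h : C(U, ℝ), Measurable fun y => h (γ y) := fun h =>
    h.continuous.measurable.comp hγ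
  have hint : ∀ h : C(U, ℝ), Integrable (fun y => h (γ y)) ν := fun h =>
    .of_bound (hmeas h).aestronglyMeasurable ‖h‖ (ae_of_all _ fun y => h.norm_coe_le_norm _)
  have hmeasure : |(∫ y, f (γ y) ∂μ) - ∫ y, f (γ y) ∂ν| ≤ ‖f‖ * tvDist μ ν :=
    abs_integral_sub_le_mul_tvDist μ ν (hmeas f) (norm_nonneg f)
      fun y => f.norm_coe_le_norm _
  have hintegrand : |(∫ y, f (γ y) ∂ν) - ∫ y, g (γ y) ∂ν| ≤ dist f g := by
    rw [← integral_sub (hint f) (hint g)]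
    have hpointwise : ∀ y, ‖f (γ y) - g (γ y)‖ ≤ dist f g := fun y => by
      simpa only [Real.dist_eq, Real.norm_eq_abs] using
        ContinuousMap.dist_apply_le_dist (f := f) (g := g) (γ y)
    simpa using norm_integral_le_of_norm_le_const (μ := ν) (ae_of_all _ hpointwise)
  linarith [abs_sub_le (∫ y, f (γ y) ∂μ) (∫ y, f (γ y) ∂ν) (∫ y, g (γ y) ∂ν)]

theorem equicontinuity_of_policy_family_general
    {X Y U : Type*}
    [MeasurableSpace X] [TopologicalSpace X]
    [MeasurableSpace Y]
    [MeasurableSpace U] [TopologicalSpace U] [BorelSpace U] [CompactSpace U]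
    (Q : Kernel X Y) [IsMarkovKernel Q]
    (hQ : ∀ (z : ℕ → X) (x0 : X), Tendsto z atTop (nhds x0) →
      Tendsto (fun n => tvDist (Q (z n)) (Q x0)) atTop (nhds 0))
    (c : X → U → ℝ) (hc : Continuous (Function.uncurry c))
    (x : X) (xk : ℕ → X) (hxk : Tendsto xk atTop (nhds x)) :
    Tendsto (fun k => ⨆ γ : {γ : Y → U // Measurable γ},
        |(∫ y, c (xk k) (γ.1 y) ∂(Q (xk k))) - ∫ y, c x (γ.1 y) ∂(Q x)|)
      atTop (nhds 0) := by
  set F : C(X, C(U, ℝ)) := ContinuousMap.curry ⟨Function.uncurry c, hc⟩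
  have hF : Tendsto (fun k => F (xk k)) atTop (𝓝 (F x)) := (F.continuous.tendsto x).comp hxk
  have hbound : ∀ k, (⨆ γ : {γ : Y → U // Measurable γ},
      |(∫ y, c (xk k) (γ.1 y) ∂(Q (xk k))) - ∫ y, c x (γ.1 y) ∂(Q x)|) ≤
      ‖F (xk k)‖ * tvDist (Q (xk k)) (Q x) + dist (F (xk k)) (F x) := fun k =>
    Real.iSup_le (fun γ => abs_integral_comp_sub_le _ _ (F (xk k)) (F x) γ.2)
      (add_nonneg (mul_nonneg (norm_nonneg _) (tvDist_nonneg _ _)) dist_nonneg)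
  have hlim : Tendsto (fun k => ‖F (xk k)‖ * tvDist (Q (xk k)) (Q x) + dist (F (xk k)) (F x))
      atTop (𝓝 0) := by
    simpa using (hF.norm.mul (hQ xk x hxk)).add (tendsto_iff_dist_tendsto_zero.1 hF)
  exact squeeze_zero (fun k => Real.iSup_nonneg fun _ => abs_nonneg _) hbound hlim

/-- If `Q` is continuous in total variation, `c` is bounded continuous, and `U` is compact,
then the family `x ↦ ∫ Q(dy|x) c(x,γ(y))`, indexed by measurable policies `γ`, is
equicontinuous: for any `x_k → x`,
`sup_γ |∫ Q(dy|x_k) c(x_k,γ(y)) − ∫ Q(dy|x) c(x,γ(y))| → 0`. -/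
theorem equicontinuity_of_policy_family
    {X Y U : Type*}
    [MeasurableSpace X] [TopologicalSpace X] [BorelSpace X]
    [MeasurableSpace Y]
    [MeasurableSpace U] [TopologicalSpace U] [BorelSpace U] [CompactSpace U]
    (Q : Kernel X Y) [IsMarkovKernel Q]
    (hQ : ∀ (z : ℕ → X) (x0 : X), Tendsto z atTop (nhds x0) →
      Tendsto (fun n => tvDist (Q (z n)) (Q x0)) atTop (nhds 0))
    (c : X → U → ℝ) (hc : Continuous (Function.uncurry c))
    (M : ℝ) (hcM : ∀ x u, |c x u| ≤ M)
    (x : X) (xk : ℕ → X) (hxk : Tendsto xk atTop (nhds x)) :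
    Tendsto (fun k => ⨆ γ : {γ : Y → U // Measurable γ},
        |(∫ y, c (xk k) (γ.1 y) ∂(Q (xk k))) - ∫ y, c x (γ.1 y) ∂(Q x)|)
      atTop (nhds 0) :=
  equicontinuity_of_policy_family_general Q hQ c hc x xk hxk
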